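/- Let T > 0 and define Λ_T(σ) := (4πT)^{−1/2} ∫_σ^∞ e^{−s²/(4T)}·(s−σ) ds for σ ≥ 0 and Λ_T(σ) := (4πT)^{−1/2} ∫_{−∞}^σ e^{−s²/(4T)}·(s−σ) ds for σ < 0. Then ∫_ℝ |Λ_T(σ)| dσ = T. -/

import Mathlib

/-!
For `σ ≥ 0` the kernel is nonnegative, and it is odd, so `|Λ_T(σ)| = Λ_T(|σ|)` and the
`L¹`-norm is `2 ∫₀^∞ Λ_T`. Write `g(s) = e^{-bs²}` with `b = 1/(4T)` and `G(σ) = ∫_σ^∞ g`.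
Since `s g(s) = -(g/(2b))'`, the inner integral is `∫_σ^∞ g(s)(s-σ) ds = g(σ)/(2b) - σ G(σ)`,
which is minus the derivative of `Φ(σ) = ½ ∫_σ^∞ g(u)(u-σ)² du`. Hence
`∫₀^∞ Λ_T = (4πT)^{-1/2} Φ(0) = (4πT)^{-1/2} G(0)/(4b) = T/2`.
-/

open MeasureTheory Real

/-- The kernel `Λ_T` arising from the Gaussian average of the Duhamel term in
the Kannai transform of an inhomogeneous diffusion equation. -/
noncomputable def Lambda (T σ : ℝ) : ℝ :=
  if 0 ≤ σ then
    (Real.sqrt (4 * Real.pi * T))⁻¹ *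
      ∫ s in Set.Ioi σ, Real.exp (-s ^ 2 / (4 * T)) * (s - σ)
  else
    (Real.sqrt (4 * Real.pi * T))⁻¹ *
      ∫ s in Set.Iio σ, Real.exp (-s ^ 2 / (4 * T)) * (s - σ)

open Set Filter Topology

section Gaussian

variable {b : ℝ}

theorem hasDerivAt_exp_neg_mul_sq (b s : ℝ) :
    HasDerivAt (fun s => exp (-b * s ^ 2)) (-(2 * b * s) * exp (-b * s ^ 2)) s := by
  convert ((hasDerivAt_pow 2 s).const_mul (-b)).exp using 1
  ring

theorem tendsto_pow_mul_exp_neg_mul_sq_atTop (hb : 0 < b) (n : ℕ) :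
    Tendsto (fun s : ℝ => s ^ n * exp (-b * s ^ 2)) atTop (𝓝 0) := by
  refine ((tendsto_rpow_abs_mul_exp_neg_mul_sq_cocompact hb n).mono_left
    atTop_le_cocompact).congr' ?_
  filter_upwards [eventually_ge_atTop 0] with s hs
  rw [abs_of_nonneg hs, rpow_natCast]

theorem integral_Ioi_mul_exp_neg_mul_sq (hb : 0 < b) (σ : ℝ) :
    ∫ s in Ioi σ, s * exp (-b * s ^ 2) = exp (-b * σ ^ 2) / (2 * b) := by
  have hderiv : ∀ s ∈ Ici σ,
      HasDerivAt (fun s => -exp (-b * s ^ 2) / (2 * b)) (s * exp (-b * s ^ 2)) s := by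
    intro s _
    refine ((hasDerivAt_exp_neg_mul_sq b s).neg.div_const (2 * b)).congr_deriv ?_
    field_simp
  have hlim : Tendsto (fun s => -exp (-b * s ^ 2) / (2 * b)) atTop (𝓝 0) := by
    simpa using (tendsto_pow_mul_exp_neg_mul_sq_atTop hb 0).neg.div_const (2 * b)
  rw [integral_Ioi_of_hasDerivAt_of_tendsto' hderiv
    (integrable_mul_exp_neg_mul_sq hb).integrableOn hlim]
  ring

noncomputable def gaussTail (b σ : ℝ) : ℝ := ∫ s in Ioi σ, exp (-b * s ^ 2)

theorem gaussTail_zero (b : ℝ) : gaussTail b 0 = √(π / b) / 2 :=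
  integral_gaussian_Ioi b

theorem gaussTail_nonneg (b σ : ℝ) : 0 ≤ gaussTail b σ :=
  setIntegral_nonneg measurableSet_Ioi fun _ _ => (exp_pos _).le

theorem gaussTail_le (hb : 0 < b) {σ : ℝ} (hσ : 1 ≤ σ) :
    gaussTail b σ ≤ exp (-b * σ ^ 2) / (2 * b) := by
  rw [← integral_Ioi_mul_exp_neg_mul_sq hb σ]
  refine setIntegral_mono_on (integrable_exp_neg_mul_sq hb).integrableOn
    (integrable_mul_exp_neg_mul_sq hb).integrableOn measurableSet_Ioi fun s hs => ?_
  exact le_mul_of_one_le_left (exp_pos _).le (hσ.trans (le_of_lt hs))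

theorem hasDerivAt_gaussTail (hb : 0 < b) (σ : ℝ) :
    HasDerivAt (gaussTail b) (-exp (-b * σ ^ 2)) σ := by
  have hsplit : gaussTail b = fun σ => gaussTail b 0 - ∫ s in (0 : ℝ)..σ, exp (-b * s ^ 2) := by
    funext σ
    rw [eq_sub_iff_add_eq', gaussTail, gaussTail, intervalIntegral.integral_interval_add_Ioi
      (integrable_exp_neg_mul_sq hb).integrableOn (integrable_exp_neg_mul_sq hb).integrableOn]
  rw [hsplit]
  exact ((hasDerivAt_const σ _).sub ((by fun_prop : Continuous fun s => exp (-b * s ^ 2)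
    ).integral_hasStrictDerivAt 0 σ).hasDerivAt).congr_deriv (zero_sub _)

theorem integral_Ioi_exp_neg_mul_sq_mul_sub (hb : 0 < b) (σ : ℝ) :
    ∫ s in Ioi σ, exp (-b * s ^ 2) * (s - σ) = exp (-b * σ ^ 2) / (2 * b) - σ * gaussTail b σ := by
  simp_rw [mul_sub, mul_comm (exp _) _]
  rw [integral_sub (integrable_mul_exp_neg_mul_sq hb).integrableOn
    ((integrable_exp_neg_mul_sq hb).integrableOn.const_mul σ), integral_Ioi_mul_exp_neg_mul_sq hb,
    integral_const_mul, gaussTail]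

theorem integral_Ioi_exp_neg_mul_sq_mul_sub_nonneg (b σ : ℝ) :
    0 ≤ ∫ s in Ioi σ, exp (-b * s ^ 2) * (s - σ) :=
  setIntegral_nonneg measurableSet_Ioi fun _ hs =>
    mul_nonneg (exp_pos _).le (sub_nonneg.mpr (le_of_lt hs))

/-- Closed form of `½ ∫_σ^∞ e^{-bu²} (u - σ)² du`. -/
noncomputable def gaussSecondTail (b σ : ℝ) : ℝ :=
  (σ ^ 2 / 2 + (4 * b)⁻¹) * gaussTail b σ - σ / (4 * b) * exp (-b * σ ^ 2)

theorem hasDerivAt_gaussSecondTail (hb : 0 < b) (σ : ℝ) :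
    HasDerivAt (gaussSecondTail b) (-∫ s in Ioi σ, exp (-b * s ^ 2) * (s - σ)) σ := by
  have hpoly : HasDerivAt (fun σ : ℝ => σ ^ 2 / 2 + (4 * b)⁻¹) σ σ := by
    simpa using ((hasDerivAt_pow 2 σ).div_const 2).add_const (4 * b)⁻¹
  have hlin : HasDerivAt (fun σ : ℝ => σ / (4 * b)) (1 / (4 * b)) σ :=
    (hasDerivAt_id σ).div_const (4 * b)
  refine ((hpoly.mul (hasDerivAt_gaussTail hb σ)).sub
    (hlin.mul (hasDerivAt_exp_neg_mul_sq b σ))).congr_deriv ?_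
  rw [integral_Ioi_exp_neg_mul_sq_mul_sub hb]
  field_simp
  ring

theorem tendsto_gaussSecondTail_atTop (hb : 0 < b) :
    Tendsto (gaussSecondTail b) atTop (𝓝 0) := by
  have hmoment (n : ℕ) (c : ℝ) :
      Tendsto (fun σ : ℝ => c * (σ ^ n * exp (-b * σ ^ 2))) atTop (𝓝 0) := by
    simpa using (tendsto_pow_mul_exp_neg_mul_sq_atTop hb n).const_mul c
  have hupper : Tendsto (fun σ : ℝ => (σ ^ 2 / 2 + (4 * b)⁻¹) * (exp (-b * σ ^ 2) / (2 * b)))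
      atTop (𝓝 0) := by
    simpa using ((hmoment 2 (4 * b)⁻¹).add (hmoment 0 (8 * b ^ 2)⁻¹)).congr fun σ => by
      field_simp
      ring
  have hfirst : Tendsto (fun σ : ℝ => (σ ^ 2 / 2 + (4 * b)⁻¹) * gaussTail b σ) atTop (𝓝 0) := by
    refine tendsto_of_tendsto_of_tendsto_of_le_of_le' tendsto_const_nhds hupper
      (Eventually.of_forall fun σ => mul_nonneg (by positivity) (gaussTail_nonneg b σ)) ?_
    filter_upwards [eventually_ge_atTop 1] with σ hσ
    exact mul_le_mul_of_nonneg_left (gaussTail_le hb hσ) (by positivity)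
  have hsecond : Tendsto (fun σ : ℝ => σ / (4 * b) * exp (-b * σ ^ 2)) atTop (𝓝 0) :=
    (hmoment 1 (4 * b)⁻¹).congr fun σ => by ring
  exact (sub_zero (0 : ℝ)) ▸ hfirst.sub hsecond

theorem integral_Ioi_zero_integral_Ioi_exp_neg_mul_sq_mul_sub (hb : 0 < b) :
    ∫ σ in Ioi 0, ∫ s in Ioi σ, exp (-b * s ^ 2) * (s - σ) = √(π / b) / (8 * b) := by
  have hderiv : ∀ σ ∈ Ici (0 : ℝ), HasDerivAt (fun σ => -gaussSecondTail b σ)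
      (∫ s in Ioi σ, exp (-b * s ^ 2) * (s - σ)) σ := fun σ _ =>
    (hasDerivAt_gaussSecondTail hb σ).neg.congr_deriv (neg_neg _)
  rw [integral_Ioi_of_hasDerivAt_of_nonneg' hderiv
    (fun σ _ => integral_Ioi_exp_neg_mul_sq_mul_sub_nonneg b σ)
    (by simpa using (tendsto_gaussSecondTail_atTop hb).neg)]
  simp only [gaussSecondTail, gaussTail_zero]
  field_simp
  ring

end Gaussian

theorem integral_Iio_neg_mul_sub_of_even {g : ℝ → ℝ} (hg : ∀ s, g (-s) = g s) (x : ℝ) :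
    ∫ s in Iio (-x), g s * (s - -x) = -∫ s in Ioi x, g s * (s - x) := by
  rw [setIntegral_congr_set Iio_ae_eq_Iic, ← integral_comp_neg_Ioi, ← integral_neg]
  refine setIntegral_congr_fun measurableSet_Ioi fun s _ => ?_
  rw [hg]
  ring

theorem Lambda_of_nonneg {T σ : ℝ} (hσ : 0 ≤ σ) :
    Lambda T σ = (√(4 * π * T))⁻¹ * ∫ s in Ioi σ, exp (-(4 * T)⁻¹ * s ^ 2) * (s - σ) := by
  simp only [Lambda, if_pos hσ, neg_mul, ← neg_div, inv_mul_eq_div]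

theorem Lambda_nonneg {T σ : ℝ} (hσ : 0 ≤ σ) : 0 ≤ Lambda T σ := by
  rw [Lambda_of_nonneg hσ]
  exact mul_nonneg (by positivity) (integral_Ioi_exp_neg_mul_sq_mul_sub_nonneg _ σ)

theorem Lambda_neg {T x : ℝ} (hx : 0 < x) : Lambda T (-x) = -Lambda T x := by
  rw [Lambda, if_neg (by linarith), Lambda, if_pos hx.le,
    integral_Iio_neg_mul_sub_of_even (fun s => by rw [neg_sq]), mul_neg]

theorem abs_Lambda (T σ : ℝ) : |Lambda T σ| = Lambda T |σ| := by
  rcases le_or_gt 0 σ with hσ | hσ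
  · rw [abs_of_nonneg hσ, abs_of_nonneg (Lambda_nonneg hσ)]
  · rw [abs_of_neg hσ, ← neg_neg σ, Lambda_neg (neg_pos.mpr hσ), abs_neg, neg_neg,
      abs_of_nonneg (Lambda_nonneg (neg_pos.mpr hσ).le)]

/-- The `L¹`-norm of the kernel `Λ_T` equals `T`. -/
theorem lambda_L1_norm (T : ℝ) (hT : 0 < T) :
    ∫ σ : ℝ, |Lambda T σ| = T := by
  have hsqrt : √(π / (4 * T)⁻¹) = √(4 * π * T) := by
    rw [div_inv_eq_mul]
    ring_nf
  calc ∫ σ : ℝ, |Lambda T σ|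
      = 2 * ∫ σ in Ioi 0, Lambda T σ := by
        simp_rw [abs_Lambda]
        exact integral_comp_abs
    _ = 2 * ((√(4 * π * T))⁻¹ *
          ∫ σ in Ioi 0, ∫ s in Ioi σ, exp (-(4 * T)⁻¹ * s ^ 2) * (s - σ)) := by
        rw [← integral_const_mul _ (fun σ => ∫ s in Ioi σ, exp (-(4 * T)⁻¹ * s ^ 2) * (s - σ))]
        exact congrArg _ (setIntegral_congr_fun measurableSet_Ioi fun σ hσ =>
          Lambda_of_nonneg (mem_Ioi.mp hσ).le)
    _ = T := by
        rw [integral_Ioi_zero_integral_Ioi_exp_neg_mul_sq_mul_sub (by positivity), hsqrt]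
        field_simp
        norm_num
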